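/- Let X₁, …, X_n (n ≥ 2) be i.i.d. random variables with law μ, a Borel probability measure supported on a compact set K ⊆ ℂ, and set P_n(z) = ∏_{i=1}^n (z − X_i). Fix C_n > 0 and let A = {|X_i − X_j| > 1/C_n for all i ≠ j}, and assume ℙ(A) > 0. Then for every 2 ≤ k ≤ n − 1, the conditional expectation satisfies E[ (1/k!)·|P_n^{(k)}(X₁)/P_n′(X₁)| | A ] ≤ binom(n−1, k−1)·C_n^{k−1}. -/

import Mathlib

open MeasureTheory Filter Polynomial Metric Set
open scoped Classical ENNReal NNReal Topology ProbabilityTheory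

noncomputable section

/-- The logarithmic potential `U_μ(z) = ∫ log|z-w| dμ(w)`, valued in `[-∞, ∞)` (as an `EReal`),
defined as the difference of the positive and negative parts. -/
def logPotential (μ : Measure ℂ) (z : ℂ) : EReal :=
  ((∫⁻ w, ENNReal.ofReal (Real.log ‖z - w‖) ∂μ : ℝ≥0∞) : EReal)
    - ((∫⁻ w, ENNReal.ofReal (-Real.log ‖z - w‖) ∂μ : ℝ≥0∞) : EReal)

/-- The logarithmic energy `I(μ) = ∫∫ log|z-w| dμ(z) dμ(w)`, valued in `EReal`. -/
def energy (μ : Measure ℂ) : EReal :=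
  ((∫⁻ q : ℂ × ℂ, ENNReal.ofReal (Real.log (‖q.1 - q.2‖)) ∂(μ.prod μ) : ℝ≥0∞) : EReal)
    - ((∫⁻ q : ℂ × ℂ, ENNReal.ofReal (-Real.log (‖q.1 - q.2‖)) ∂(μ.prod μ) : ℝ≥0∞) : EReal)

/-- Borel probability measures supported on `K`. -/
def probOn (K : Set ℂ) : Set (Measure ℂ) :=
  {μ | IsProbabilityMeasure μ ∧ μ Kᶜ = 0}

/-- `log c(K) = sup {I(μ) : μ ∈ P(K)}`. -/
def logCapacity (K : Set ℂ) : EReal :=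
  ⨆ μ ∈ probOn K, energy μ

/-- The logarithmic capacity `c(K)`, with `c(K) = 0` when the sup of energies is `-∞`. -/
def capacity (K : Set ℂ) : ℝ≥0∞ :=
  (logCapacity K).exp

/-- The filled unit lemniscate `Λ_p = {z : |p(z)| < 1}`. -/
def lemniscate (p : Polynomial ℂ) : Set ℂ := {z | ‖p.eval z‖ < 1}

/-- The number of connected components of a planar set. -/
def numComponents (S : Set ℂ) : ℕ := Nat.card (ConnectedComponents S)

/-- `𝒫_n(K)`: monic polynomials of degree `n` with all zeros in `K`. -/
def monicProdOn (K : Set ℂ) (n : ℕ) : Set (Polynomial ℂ) :=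
  {p | ∃ z : Fin n → ℂ, (∀ j, z j ∈ K) ∧ p = ∏ j, (X - C (z j))}

/-- `𝒞_n(K) = sup {𝒞(Λ_p) : p ∈ 𝒫_n(K)}`. -/
def maxComponents (K : Set ℂ) (n : ℕ) : ℕ :=
  sSup ((fun p => numComponents (lemniscate p)) '' monicProdOn K n)

/-- `M(K) = limsup 𝒞_n(K)/n`. -/
def MK (K : Set ℂ) : ℝ := limsup (fun n : ℕ => (maxComponents K n : ℝ) / n) atTop

/-- `m(K) = liminf 𝒞_n(K)/n`. -/
def mK (K : Set ℂ) : ℝ := liminf (fun n : ℕ => (maxComponents K n : ℝ) / n) atTop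

/-- A bounded Jordan domain: a bounded open connected set whose boundary is the image of an
injective continuous map from the unit circle. -/
def IsJordanDomain (Ω : Set ℂ) : Prop :=
  IsOpen Ω ∧ IsConnected Ω ∧ Bornology.IsBounded Ω ∧
    ∃ γ : (Metric.sphere (0 : ℂ) 1) → ℂ, Continuous γ ∧ Function.Injective γ ∧
      frontier Ω = Set.range γ

/-- A `C²` Jordan arc: the image of an injective `C²` map on `[0,1]` with nowhere-vanishing
derivative. -/
def IsC2JordanArc (A : Set ℂ) : Prop :=
  ∃ γ : ℝ → ℂ, ContDiff ℝ 2 γ ∧ Set.InjOn γ (Set.Icc 0 1) ∧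
    (∀ t ∈ Set.Icc (0 : ℝ) 1, deriv γ t ≠ 0) ∧ A = γ '' Set.Icc 0 1

/-- A bounded Jordan domain with `C²` boundary: bounded, open, connected, whose boundary is
parametrized by a `C²`, `2π`-periodic map, injective on `[0, 2π)`, with nowhere-vanishing
derivative. -/
def IsC2JordanDomain (Ω : Set ℂ) : Prop :=
  IsOpen Ω ∧ IsConnected Ω ∧ Bornology.IsBounded Ω ∧
    ∃ γ : ℝ → ℂ, ContDiff ℝ 2 γ ∧ Function.Periodic γ (2 * Real.pi) ∧
      Set.InjOn γ (Set.Ico 0 (2 * Real.pi)) ∧ (∀ t, deriv γ t ≠ 0) ∧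
      frontier Ω = Set.range γ

/-! The bound holds pointwise on `A`, hence also for the average over `A`. Pointwise, write
`P = (X - X₁) Q`. Expanding at `X₁`, both `P^{(k)}(X₁) / k!` and `P'(X₁)` are Taylor coefficients
of `Q`, of orders `k - 1` and `0`: the sum over `(n - k)`-subsets `T` of `{X_j : j ≠ 1}` of
`∏_{j ∈ T} (X₁ - X_j)`, and the full product `∏_{j ≠ 1} (X₁ - X_j)`. Each term of the sum is the
full product with `k - 1` factors of modulus `> 1 / C_n` removed, so it is at most `C_n^{k-1}`
times the full product, and there are `binom(n-1, k-1)` terms. -/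

namespace Polynomial

variable {R : Type*} [CommRing R]

theorem taylor_prod_X_sub_C {ι : Type*} (s : Finset ι) (a : ι → R) (x : R) :
    taylor x (∏ i ∈ s, (X - C (a i))) = ∏ i ∈ s, (X + C (x - a i)) := by
  rw [taylor_apply, prod_comp]
  refine Finset.prod_congr rfl fun i _ => ?_
  rw [sub_comp, X_comp, C_comp, C_sub]
  ring

theorem eval_hasseDeriv_prod_X_sub_C {ι : Type*} (s : Finset ι) (a : ι → R) (x : R) {m : ℕ}
    (hm : m ≤ s.card) :
    (hasseDeriv m (∏ i ∈ s, (X - C (a i)))).eval x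
      = ∑ T ∈ s.powersetCard (s.card - m), ∏ i ∈ T, (x - a i) := by
  rw [← taylor_coeff, taylor_prod_X_sub_C, Finset.prod_X_add_C_coeff _ _ hm]

theorem eval_hasseDeriv_succ_X_sub_C_mul_self (q : R[X]) (x : R) (m : ℕ) :
    (hasseDeriv (m + 1) ((X - C x) * q)).eval x = (hasseDeriv m q).eval x := by
  rw [← taylor_coeff, ← taylor_coeff, taylor_mul, map_sub, taylor_X, taylor_C, add_sub_cancel_right,
    coeff_X_mul]

end Polynomial

theorem norm_prod_le_pow_mul_norm_prod_of_subset {ι 𝕜 : Type*} [NormedField 𝕜] {E T : Finset ι}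
    {b : ι → 𝕜} {c : ℝ} (hc : 0 < c) (hb : ∀ j ∈ E, 1 / c ≤ ‖b j‖) (hTE : T ⊆ E) :
    ‖∏ j ∈ T, b j‖ ≤ c ^ (E \ T).card * ‖∏ j ∈ E, b j‖ := by
  have hlow : (1 / c) ^ (E \ T).card ≤ ‖∏ j ∈ E \ T, b j‖ := by
    rw [norm_prod, ← Finset.prod_const]
    exact Finset.prod_le_prod (fun _ _ => by positivity)
      fun j hj => hb j (Finset.mem_sdiff.1 hj).1
  calc ‖∏ j ∈ T, b j‖
      = c ^ (E \ T).card * ((1 / c) ^ (E \ T).card * ‖∏ j ∈ T, b j‖) := by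
        rw [← mul_assoc, ← mul_pow, mul_one_div_cancel hc.ne', one_pow, one_mul]
    _ ≤ c ^ (E \ T).card * (‖∏ j ∈ E \ T, b j‖ * ‖∏ j ∈ T, b j‖) := by gcongr
    _ = c ^ (E \ T).card * ‖∏ j ∈ E, b j‖ := by rw [← norm_mul, Finset.prod_sdiff hTE]

theorem norm_sum_powersetCard_prod_le {ι 𝕜 : Type*} [NormedField 𝕜] {E : Finset ι}
    {b : ι → 𝕜} {c : ℝ} (hc : 0 < c) (hb : ∀ j ∈ E, 1 / c ≤ ‖b j‖) {m : ℕ} (hm : m ≤ E.card) :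
    ‖∑ T ∈ E.powersetCard (E.card - m), ∏ j ∈ T, b j‖
      ≤ (E.card.choose m : ℝ) * c ^ m * ‖∏ j ∈ E, b j‖ := by
  have hterm : ∀ T ∈ E.powersetCard (E.card - m), ‖∏ j ∈ T, b j‖ ≤ c ^ m * ‖∏ j ∈ E, b j‖ := by
    intro T hT
    obtain ⟨hTE, hTcard⟩ := Finset.mem_powersetCard.1 hT
    have hcard : (E \ T).card = m := by
      rw [Finset.card_sdiff_of_subset hTE, hTcard]
      omega
    simpa only [hcard] using norm_prod_le_pow_mul_norm_prod_of_subset hc hb hTE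
  calc ‖∑ T ∈ E.powersetCard (E.card - m), ∏ j ∈ T, b j‖
      ≤ ∑ T ∈ E.powersetCard (E.card - m), ‖∏ j ∈ T, b j‖ := norm_sum_le _ _
    _ ≤ ∑ _T ∈ E.powersetCard (E.card - m), c ^ m * ‖∏ j ∈ E, b j‖ := Finset.sum_le_sum hterm
    _ = (E.card.choose m : ℝ) * c ^ m * ‖∏ j ∈ E, b j‖ := by
      rw [Finset.sum_const, Finset.card_powersetCard, Nat.choose_symm hm, nsmul_eq_mul, mul_assoc]

theorem inv_factorial_mul_norm_iterate_derivative_div_le {ι 𝕜 : Type*} [RCLike 𝕜] {s : Finset ι}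
    {a : ι → 𝕜} {i : ι} (hi : i ∈ s) {c : ℝ} (hc : 0 < c)
    (hsep : ∀ j ∈ s, j ≠ i → 1 / c < ‖a i - a j‖) {k : ℕ} (hk : 1 ≤ k) (hks : k ≤ s.card) :
    1 / (k.factorial : ℝ) *
        (‖(derivative^[k] (∏ j ∈ s, (X - C (a j)))).eval (a i)‖ /
          ‖(∏ j ∈ s, (X - C (a j))).derivative.eval (a i)‖)
      ≤ ((s.card - 1).choose (k - 1) : ℝ) * c ^ (k - 1) := by
  obtain ⟨m, rfl⟩ := Nat.exists_eq_add_of_le' hk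
  set E := s.erase i
  have hcardE : E.card = s.card - 1 := Finset.card_erase_of_mem hi
  have hP : ∏ j ∈ s, (X - C (a j)) = (X - C (a i)) * ∏ j ∈ E, (X - C (a j)) :=
    (Finset.mul_prod_erase s _ hi).symm
  have hb : ∀ j ∈ E, 1 / c ≤ ‖a i - a j‖ := fun j hj =>
    (hsep j (Finset.mem_of_mem_erase hj) (Finset.ne_of_mem_erase hj)).le
  have hQpos : 0 < ‖∏ j ∈ E, (a i - a j)‖ := by
    rw [norm_prod]
    exact Finset.prod_pos fun j hj => lt_of_lt_of_le (by positivity) (hb j hj)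
  have hnum : ‖(derivative^[m + 1] (∏ j ∈ s, (X - C (a j)))).eval (a i)‖
      = (m + 1).factorial * ‖∑ T ∈ E.powersetCard (E.card - m), ∏ j ∈ T, (a i - a j)‖ := by
    rw [← factorial_smul_hasseDeriv, LinearMap.smul_apply, eval_smul, nsmul_eq_mul, norm_mul,
      RCLike.norm_natCast, hP, eval_hasseDeriv_succ_X_sub_C_mul_self,
      eval_hasseDeriv_prod_X_sub_C _ _ _ (by omega)]
  have hden : (∏ j ∈ s, (X - C (a j))).derivative.eval (a i) = ∏ j ∈ E, (a i - a j) := by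
    rw [← hasseDeriv_one', hP, eval_hasseDeriv_succ_X_sub_C_mul_self, hasseDeriv_zero', eval_prod]
    simp only [eval_sub, eval_X, eval_C]
  rw [hnum, hden, Nat.add_sub_cancel, ← hcardE, one_div, ← mul_div_assoc, ← mul_assoc,
    inv_mul_cancel₀ (by positivity), one_mul, div_le_iff₀ hQpos]
  exact norm_sum_powersetCard_prod_le hc hb (by omega)

theorem setIntegral_div_toReal_le_of_norm_le {α : Type*} [MeasurableSpace α] {μ : Measure α}
    {s : Set α} {f : α → ℝ} {B : ℝ} (hB : 0 ≤ B) (hf : ∀ x ∈ s, ‖f x‖ ≤ B) :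
    (∫ x in s, f x ∂μ) / (μ s).toReal ≤ B := by
  rcases eq_or_ne (μ s) ∞ with hs | hs
  · simpa [hs] using hB
  · exact div_le_of_le_mul₀ ENNReal.toReal_nonneg hB
      ((le_abs_self _).trans (norm_setIntegral_le_of_norm_le_const hs.lt_top hf))

theorem statement17 {Ωs : Type*} [MeasureSpace Ωs]
    (n : ℕ) (hn : 2 ≤ n) (Xv : Fin n → Ωs → ℂ)
    (Cn : ℝ) (hCn : 0 < Cn)
    (A : Set Ωs)
    (hA : A = {ω | ∀ i j : Fin n, i ≠ j → 1 / Cn < ‖Xv i ω - Xv j ω‖})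
    (k : ℕ) (hk2 : 2 ≤ k) (hkn : k ≤ n - 1) :
    (∫ ω in A,
        (1 / (Nat.factorial k : ℝ)) *
          (‖(Polynomial.derivative^[k]
              (∏ i, (X - Polynomial.C (Xv i ω)) : Polynomial ℂ)).eval (Xv ⟨0, by omega⟩ ω)‖ /
            ‖(∏ i, (X - Polynomial.C (Xv i ω)) : Polynomial ℂ).derivative.eval
              (Xv ⟨0, by omega⟩ ω)‖) ∂ℙ) / (ℙ A).toReal ≤
      (Nat.choose (n - 1) (k - 1) : ℝ) * Cn ^ (k - 1) := by
  refine setIntegral_div_toReal_le_of_norm_le (by positivity) fun ω hω => ?_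
  rw [Real.norm_eq_abs, abs_of_nonneg (by positivity)]
  have hsep : ∀ j ∈ Finset.univ, j ≠ ⟨0, by omega⟩ → 1 / Cn < ‖Xv ⟨0, by omega⟩ ω - Xv j ω‖ :=
    fun j _ hj => (hA ▸ hω) _ j (Ne.symm hj)
  simpa only [Finset.card_univ, Fintype.card_fin] using
    inv_factorial_mul_norm_iterate_derivative_div_le (a := (Xv · ω)) (Finset.mem_univ _) hCn hsep
      (by omega) (by simp only [Finset.card_univ, Fintype.card_fin]; omega)
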